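/- arXiv:2402.01803 — 4 statements merged into one kernel-verified Lean document; each statement's English description precedes it below -/
import Mathlib

section
/- Let v: ℕ⁴ → ℝ₊ be increasing in ℓ₁ and in ℓ₃ (i.e. v(x) ≤ v(x+ℓ₁) and v(x) ≤ v(x+ℓ₃) for all x). Then for any x ∈ ℕ⁴ and any matching m ∈ M_x, the matching m' = m + ((x₀−m₀)∧(x₁−m₁))ℓ₁ + ((x₂−m₂)∧(x₃−m₃))ℓ₃ also belongs to M_x and satisfies v(x−m'+a) ≤ v(x−m+a) for every a ∈ ℕ⁴. -/
open Finset Filter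

abbrev St := Fin 4 → ℕ

def ev (i : Fin 4) : St := fun j => if j = i then 1 else 0

def l1 : St := ev 0 + ev 1
def l2 : St := ev 1 + ev 2
def l3 : St := ev 2 + ev 3

def IsMatching (x m : St) : Prop :=
  (∃ n1 n2 n3 : ℕ, m = n1 • l1 + n2 • l2 + n3 • l3) ∧ ∀ i, m i ≤ x i

noncomputable def Ev (μ : Fin 4 → ℝ) (v : St → ℝ) (y : St) : ℝ :=
  ∑ i, μ i * v (y + ev i)

noncomputable def Lg (μ : Fin 4 → ℝ) (c v : St → ℝ) (γ : ℝ) (x : St) : ℝ :=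
  c x + γ * sInf {s : ℝ | ∃ m : St, IsMatching x m ∧ s = Ev μ v (x - m)}

def IsProb (μ : Fin 4 → ℝ) : Prop := (∀ i, 0 ≤ μ i) ∧ ∑ i, μ i = 1

def costF (c0 c1 c2 c3 : ℝ) : St → ℝ := fun x => c0 * x 0 + c1 * x 1 + c2 * x 2 + c3 * x 3

def I1 (v : St → ℝ) : Prop := ∀ x, v x ≤ v (x + l1)
def I3 (v : St → ℝ) : Prop := ∀ x, v x ≤ v (x + l3)
def Iprime (v : St → ℝ) : Prop := ∀ x : St, 0 < x 1 → 0 < x 2 →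
  v x ≤ v (x + l1 - l2) ∧ v x ≤ v (x + l3 - l2)
def Conv2 (v : St → ℝ) : Prop := ∀ x : St, x 0 ≤ x 1 + 1 → x 3 ≤ x 2 + 1 →
  v (x + l2) - v x ≤ v (x + 2 • l2) - v (x + l2)

def kk (t : ℕ∞) (x : St) : ℕ :=
  match t with
  | ⊤ => 0
  | (n : ℕ) => (min ((x 1 : ℤ) - x 0) ((x 2 : ℤ) - x 3) - n).toNat

def ii (x : St) : ℤ := ((x 1 : ℤ) - x 0) - ((x 2 : ℤ) - x 3)

def mstar (T : ℤ → ℕ∞) (x : St) : St :=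
  min (x 0) (x 1) • l1 + kk (T (ii x)) x • l2 + min (x 2) (x 3) • l3


def ClassB (v : St → ℝ) : Prop :=
  (∀ (β : ℕ) (i : Fin 4), i ≠ 1 →
    v ((![1,0,β,0] + ev i) + l2 - l1) - v (![1,0,β,0] + ev i)
      ≤ v ((![1,0,β,0] + ev i) + 2 • l2 - l1) - v ((![1,0,β,0] + ev i) + l2 - l1)) ∧
  (∀ (β : ℕ) (i : Fin 4), i ≠ 2 →
    v ((![0,β,0,1] + ev i) + l2 - l3) - v (![0,β,0,1] + ev i)
      ≤ v ((![0,β,0,1] + ev i) + 2 • l2 - l3) - v ((![0,β,0,1] + ev i) + l2 - l3)) ∧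
  (∀ i : Fin 4,
    v ((![1,0,0,1] + ev i) + l2 - l1 - l3) - v (![1,0,0,1] + ev i)
      ≤ v ((![1,0,0,1] + ev i) + 2 • l2 - l1 - l3) - v ((![1,0,0,1] + ev i) + l2 - l1 - l3))

def ClassC' (v : St → ℝ) : Prop :=
  (∀ (α β : ℕ) (i : Fin 4), 2 ≤ α →
    v ((![α,0,β,0] + ev i) + l2 - l1) - v (![α,0,β,0] + ev i)
      ≤ v ((![α,0,β,0] + ev i) + 2 • l2 - 2 • l1) - v ((![α,0,β,0] + ev i) + l2 - l1)) ∧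
  (∀ (α : ℕ) (i : Fin 4), 2 ≤ α →
    v ((![α,0,0,1] + ev i) + l2 - l1 - l3) - v (![α,0,0,1] + ev i)
      ≤ v ((![α,0,0,1] + ev i) + 2 • l2 - 2 • l1 - l3) - v ((![α,0,0,1] + ev i) + l2 - l1 - l3)) ∧
  (∀ (α β : ℕ) (i : Fin 4), 2 ≤ α →
    v ((![0,β,0,α] + ev i) + l2 - l3) - v (![0,β,0,α] + ev i)
      ≤ v ((![0,β,0,α] + ev i) + 2 • l2 - 2 • l3) - v ((![0,β,0,α] + ev i) + l2 - l3)) ∧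
  (∀ (α : ℕ) (i : Fin 4), 2 ≤ α →
    v ((![1,0,0,α] + ev i) + l2 - l3 - l1) - v (![1,0,0,α] + ev i)
      ≤ v ((![1,0,0,α] + ev i) + 2 • l2 - 2 • l3 - l1) - v ((![1,0,0,α] + ev i) + l2 - l3 - l1)) ∧
  (∀ (α β : ℕ) (i : Fin 4), 2 ≤ α → 2 ≤ β →
    v ((![α,0,0,β] + ev i) + l2 - l1 - l3) - v (![α,0,0,β] + ev i)
      ≤ v ((![α,0,0,β] + ev i) + 2 • l2 - 2 • l1 - 2 • l3) - v ((![α,0,0,β] + ev i) + l2 - l1 - l3))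

def traj (u : ℕ → St → St) (x : St) (a : ℕ → Fin 4) : ℕ → St
  | 0 => x
  | n + 1 => u n (traj u x a n) + ev (a (n + 1))

def Adm (u : ℕ → St → St) : Prop := ∀ n x, ∃ m : St, IsMatching x m ∧ u n x = x - m

def ext (p : ℕ) (s : Fin p → Fin 4) : ℕ → Fin 4 :=
  fun n => if h : n - 1 < p then s ⟨n - 1, h⟩ else 0

noncomputable def wt : St → ℝ := fun x => x 0 + x 1 + x 2 + x 3 + 1

/-! The residual minima k₁, k₃ are chosen so that d = k₁ℓ₁ + k₃ℓ₃ still fits into x − m; then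
x − m + a = (x − m' + a) + k₁ℓ₁ + k₃ℓ₃, and k₁ steps of monotonicity along ℓ₁ followed by k₃
steps along ℓ₃ give the inequality. -/

theorem le_add_nsmul_of_forall_le_add {M α : Type*} [AddMonoid M] [Preorder α] {v : M → α}
    {d : M} (h : ∀ y, v y ≤ v (y + d)) (k : ℕ) (y : M) : v y ≤ v (y + k • d) := by
  induction k with
  | zero => simp
  | succ k ih => exact ih.trans (by rw [succ_nsmul, ← add_assoc]; exact h _)

theorem min_nsmul_l1_add_min_nsmul_l3_le (x m : St) :
    min (x 0 - m 0) (x 1 - m 1) • l1 + min (x 2 - m 2) (x 3 - m 3) • l3 ≤ x - m := by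
  intro i
  fin_cases i <;> simp [l1, l3, ev]

theorem stmt2_general (v : St → ℝ) (hI1 : I1 v) (hI3 : I3 v)
    (x m : St) (hm : IsMatching x m) :
    IsMatching x (m + min (x 0 - m 0) (x 1 - m 1) • l1 + min (x 2 - m 2) (x 3 - m 3) • l3) ∧
    ∀ a : St,
      v (x - (m + min (x 0 - m 0) (x 1 - m 1) • l1 + min (x 2 - m 2) (x 3 - m 3) • l3) + a)
        ≤ v (x - m + a) := by
  obtain ⟨⟨n1, n2, n3, hdec⟩, hmx⟩ := hm
  set k1 := min (x 0 - m 0) (x 1 - m 1)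
  set k3 := min (x 2 - m 2) (x 3 - m 3)
  have hd : k1 • l1 + k3 • l3 ≤ x - m := min_nsmul_l1_add_min_nsmul_l3_le x m
  refine ⟨⟨⟨n1 + k1, n2, n3 + k3, by rw [hdec]; module⟩, ?_⟩, fun a => ?_⟩
  · rw [add_assoc]
    exact add_le_of_le_tsub_left_of_le hmx hd
  calc v (x - (m + k1 • l1 + k3 • l3) + a)
      ≤ v (x - (m + k1 • l1 + k3 • l3) + a + k1 • l1) := le_add_nsmul_of_forall_le_add hI1 _ _
    _ ≤ v (x - (m + k1 • l1 + k3 • l3) + a + k1 • l1 + k3 • l3) :=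
        le_add_nsmul_of_forall_le_add hI3 _ _
    _ = v (x - m + a) := by
        rw [add_assoc m, tsub_add_eq_tsub_tsub, add_assoc _ (k1 • l1), add_right_comm,
          tsub_add_cancel_of_le hd]

theorem stmt2 (v : St → ℝ) (hv : ∀ x, 0 ≤ v x) (hI1 : I1 v) (hI3 : I3 v)
    (x m : St) (hm : IsMatching x m) :
    IsMatching x (m + min (x 0 - m 0) (x 1 - m 1) • l1 + min (x 2 - m 2) (x 3 - m 3) • l3) ∧
    ∀ a : St,
      v (x - (m + min (x 0 - m 0) (x 1 - m 1) • l1 + min (x 2 - m 2) (x 3 - m 3) • l3) + a)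
        ≤ v (x - m + a) :=
  stmt2_general v hI1 hI3 x m hm
end

section
/- If v: ℕ⁴ → ℝ₊ belongs to I₁ ∩ C₂ and satisfies property (i) of class B, then inequality (4), namely v(b+2ℓ₂−ℓ₁) − v(b+ℓ₂−ℓ₁) ≥ v(b+ℓ₂−ℓ₁) − v(b), holds for all b of the form b = (1,0,β,0) + eᵢ with β ≥ 0 and i ∈ {0,1,2,3} (i.e. also for i = 1, not just i ∈ {0,2,3}). -/
open Finset Filter

lemma sub_add_l1_le_of_I1_of_Conv2 {v : St → ℝ} (hI1 : I1 v) (hC : Conv2 v) {x : St}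
    (h0 : x 0 ≤ x 1 + 1) (h3 : x 3 ≤ x 2 + 1) :
    v (x + l2) - v (x + l1) ≤ v (x + 2 • l2) - v (x + l2) := by
  linarith [hI1 x, hC x h0 h3]

lemma add_l1_add_sub_l1 (x y : St) : x + l1 + y - l1 = x + y := by
  rw [add_right_comm, add_tsub_cancel_right]

theorem stmt6_general (v : St → ℝ) (hI1 : I1 v) (hC : Conv2 v)
    (hB : ∀ (β : ℕ) (i : Fin 4), i ≠ 1 →
      v ((![1,0,β,0] + ev i) + l2 - l1) - v (![1,0,β,0] + ev i)
        ≤ v ((![1,0,β,0] + ev i) + 2 • l2 - l1) - v ((![1,0,β,0] + ev i) + l2 - l1)) :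
    ∀ (β : ℕ) (i : Fin 4),
      v ((![1,0,β,0] + ev i) + l2 - l1) - v (![1,0,β,0] + ev i)
        ≤ v ((![1,0,β,0] + ev i) + 2 • l2 - l1) - v ((![1,0,β,0] + ev i) + l2 - l1) := by
  intro β i
  rcases eq_or_ne i 1 with rfl | hi
  · have hb : (![1,0,β,0] + ev 1 : St) = ![0,0,β,0] + l1 := by
      ext j; fin_cases j <;> rfl
    rw [hb, add_l1_add_sub_l1, add_l1_add_sub_l1]
    exact sub_add_l1_le_of_I1_of_Conv2 hI1 hC (by simp) (by simp)
  · exact hB β i hi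

theorem stmt6 (v : St → ℝ) (hv : ∀ x, 0 ≤ v x) (hI1 : I1 v) (hC : Conv2 v)
    (hB : ∀ (β : ℕ) (i : Fin 4), i ≠ 1 →
      v ((![1,0,β,0] + ev i) + l2 - l1) - v (![1,0,β,0] + ev i)
        ≤ v ((![1,0,β,0] + ev i) + 2 • l2 - l1) - v ((![1,0,β,0] + ev i) + l2 - l1)) :
    ∀ (β : ℕ) (i : Fin 4),
      v ((![1,0,β,0] + ev i) + l2 - l1) - v (![1,0,β,0] + ev i)
        ≤ v ((![1,0,β,0] + ev i) + 2 • l2 - l1) - v ((![1,0,β,0] + ev i) + l2 - l1) :=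
  stmt6_general v hI1 hC hB
end

section
/- If v: ℕ⁴ → ℝ₊ belongs to I₃ ∩ C₂ and satisfies property (ii) of class B, then inequality v(b+2ℓ₂−ℓ₃) − v(b+ℓ₂−ℓ₃) ≥ v(b+ℓ₂−ℓ₃) − v(b) holds for all b of the form b = (0,β,0,1)+eᵢ with β ≥ 0 and i ∈ {0,1,2,3}. -/
open Finset Filter

theorem stmt7 (v : St → ℝ) (hv : ∀ x, 0 ≤ v x) (hI3 : I3 v) (hC : Conv2 v)
    (hB : ∀ (β : ℕ) (i : Fin 4), i ≠ 2 →
      v ((![0,β,0,1] + ev i) + l2 - l3) - v (![0,β,0,1] + ev i)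
        ≤ v ((![0,β,0,1] + ev i) + 2 • l2 - l3) - v ((![0,β,0,1] + ev i) + l2 - l3)) :
    ∀ (β : ℕ) (i : Fin 4),
      v ((![0,β,0,1] + ev i) + l2 - l3) - v (![0,β,0,1] + ev i)
        ≤ v ((![0,β,0,1] + ev i) + 2 • l2 - l3) - v ((![0,β,0,1] + ev i) + l2 - l3) := by
  intro β i
  by_cases h2 : i = 2
  · subst h2
    set x : St := ![0, β, 0, 0] with hx
    have hx0 : x 0 ≤ x 1 + 1 := by simp [hx]
    have hx3 : x 3 ≤ x 2 + 1 := by simp [hx]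
    have hconv := hC x hx0 hx3
    have e1 : x + l2 = (![0,β,0,1] + ev 2) + l2 - l3 := by
      funext j
      fin_cases j <;> simp [hx, l2, l3, ev] <;> rfl
    have e2 : x + 2 • l2 = (![0,β,0,1] + ev 2) + 2 • l2 - l3 := by
      funext j
      fin_cases j <;> simp [hx, l2, l3, ev] <;> rfl
    have e3 : x + l3 = ![0,β,0,1] + ev 2 := by
      funext j
      fin_cases j <;> simp [hx, l3, ev] <;> rfl
    have hmono := hI3 x
    rw [e3] at hmono
    rw [e1, e2] at hconv
    linarith
  · exact hB β i h2
end

section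
/- Stability of C₂ under L^γ (first case of Step I): let v ∈ I₁ ∩ I₃ ∩ I' ∩ C₂ ∩ B, let m* be the optimal threshold rule for v, and let x ∈ ℕ⁴ with x₁ ≥ x₀ and x₂ ≥ x₃. Then L^γ v(x+2ℓ₂) − L^γ v(x+ℓ₂) ≥ L^γ v(x+ℓ₂) − L^γ v(x). -/
open Finset Filter

set_option linter.all false
def zz (a b : ℕ) : St := fun i => if i = 1 then a else if i = 2 then b else 0

lemma zz_l2 (a b : ℕ) : zz (a+1) (b+1) = zz a b + l2 := by
  funext i; fin_cases i <;> simp [zz, l2, ev]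

lemma zz_2l2 (a b : ℕ) : zz (a+2) (b+2) = zz a b + 2 • l2 := by
  funext i; fin_cases i <;> simp [zz, l2, ev]

lemma lg_eq (μ : Fin 4 → ℝ) (c v : St → ℝ) (γ : ℝ) (w m0 : St)
    (hm0 : IsMatching w m0)
    (hopt : ∀ m, IsMatching w m → Ev μ v (w - m0) ≤ Ev μ v (w - m)) :
    Lg μ c v γ w = c w + γ * Ev μ v (w - m0) := by
  have h : sInf {s : ℝ | ∃ m : St, IsMatching w m ∧ s = Ev μ v (w - m)} = Ev μ v (w - m0) := by
    apply IsLeast.csInf_eq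
    refine ⟨⟨m0, hm0, rfl⟩, ?_⟩
    rintro s ⟨m, hm, rfl⟩
    exact hopt m hm
  rw [Lg, h]

lemma sub_m (w : St) (h01 : w 0 ≤ w 1) (h32 : w 3 ≤ w 2) (k : ℕ) :
    w - (min (w 0) (w 1) • l1 + k • l2 + min (w 2) (w 3) • l3)
      = zz (w 1 - w 0 - k) (w 2 - w 3 - k) := by
  funext i
  fin_cases i <;>
    simp [zz, l1, l2, l3, ev, min_eq_left h01, min_eq_right h32] <;> omega

lemma ev_conv (μ : Fin 4 → ℝ) (hμ : ∀ i, 0 ≤ μ i) (v : St → ℝ) (hC : Conv2 v)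
    (a b : ℕ) :
    Ev μ v (zz a b + l2) - Ev μ v (zz a b)
      ≤ Ev μ v (zz a b + 2 • l2) - Ev μ v (zz a b + l2) := by
  have key : ∀ i : Fin 4,
      μ i * v ((zz a b + ev i) + l2) - μ i * v (zz a b + ev i)
        ≤ μ i * v ((zz a b + ev i) + 2 • l2) - μ i * v ((zz a b + ev i) + l2) := by
    intro i
    have h1 : (zz a b + ev i) 0 ≤ (zz a b + ev i) 1 + 1 := by
      simp [zz, ev]; split_ifs <;> omega
    have h2 : (zz a b + ev i) 3 ≤ (zz a b + ev i) 2 + 1 := by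
      simp [zz, ev]; split_ifs <;> omega
    have h := hC _ h1 h2
    have h' := mul_le_mul_of_nonneg_left h (hμ i)
    rw [mul_sub, mul_sub] at h'
    exact h'
  have e1 : ∀ i : Fin 4, zz a b + l2 + ev i = (zz a b + ev i) + l2 := fun i => by
    apply add_right_comm
  have e2 : ∀ i : Fin 4, zz a b + 2 • l2 + ev i = (zz a b + ev i) + 2 • l2 := fun i => by
    apply add_right_comm
  simp only [Ev, e1, e2, Fin.sum_univ_four]
  linarith [key 0, key 1, key 2, key 3]

lemma zz_congr {a b a' b' : ℕ} (ha : a = a') (hb : b = b') : zz a b = zz a' b' := by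
  rw [ha, hb]
lemma main_conv (μ : Fin 4 → ℝ) (hμ0 : ∀ i, 0 ≤ μ i) (v : St → ℝ) (hC : Conv2 v)
    (d1 d2 : ℕ) :
    Ev μ v (zz (d1+1) (d2+1)) - Ev μ v (zz d1 d2)
      ≤ Ev μ v (zz (d1+2) (d2+2)) - Ev μ v (zz (d1+1) (d2+1)) := by
  rw [zz_l2, zz_2l2]; exact ev_conv μ hμ0 v hC d1 d2

set_option maxHeartbeats 1600000 in
lemma core (μ : Fin 4 → ℝ) (hμ0 : ∀ i, 0 ≤ μ i) (v : St → ℝ) (hC : Conv2 v)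
    (T : ℤ → ℕ∞)
    (hT : ∀ y : St, IsMatching y (mstar T y) ∧
      ∀ m : St, IsMatching y m → Ev μ v (y - mstar T y) ≤ Ev μ v (y - m))
    (x : St) (hx1 : x 0 ≤ x 1) (hx2 : x 3 ≤ x 2) :
    Ev μ v ((x + l2) - mstar T (x + l2)) - Ev μ v (x - mstar T x)
      ≤ Ev μ v ((x + 2 • l2) - mstar T (x + 2 • l2))
        - Ev μ v ((x + l2) - mstar T (x + l2)) := by
  have p0 : (x + l2) 0 = x 0 := by simp [l2, ev]
  have p1 : (x + l2) 1 = x 1 + 1 := by simp [l2, ev]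
  have p2 : (x + l2) 2 = x 2 + 1 := by simp [l2, ev]
  have p3 : (x + l2) 3 = x 3 := by simp [l2, ev]
  have q0 : (x + 2 • l2) 0 = x 0 := by simp [l2, ev]
  have q1 : (x + 2 • l2) 1 = x 1 + 2 := by simp [l2, ev]
  have q2 : (x + 2 • l2) 2 = x 2 + 2 := by simp [l2, ev]
  have q3 : (x + 2 • l2) 3 = x 3 := by simp [l2, ev]
  have hii1 : ii (x + l2) = ii x := by
    simp only [ii, p0, p1, p2, p3]; push_cast; ring
  have hii2 : ii (x + 2 • l2) = ii x := by
    simp only [ii, q0, q1, q2, q3]; push_cast; ring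
  have m0 : x - mstar T x
      = zz (x 1 - x 0 - kk (T (ii x)) x) (x 2 - x 3 - kk (T (ii x)) x) := by
    rw [mstar]; exact sub_m x hx1 hx2 _
  have m1 : (x + l2) - mstar T (x + l2)
      = zz (x 1 + 1 - x 0 - kk (T (ii x)) (x + l2))
           (x 2 + 1 - x 3 - kk (T (ii x)) (x + l2)) := by
    rw [mstar, hii1]
    have h := sub_m (x + l2) (by rw [p0, p1]; omega) (by rw [p3, p2]; omega)
      (kk (T (ii x)) (x + l2))
    rw [p0, p1, p2, p3] at h
    exact h
  have m2 : (x + 2 • l2) - mstar T (x + 2 • l2)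
      = zz (x 1 + 2 - x 0 - kk (T (ii x)) (x + 2 • l2))
           (x 2 + 2 - x 3 - kk (T (ii x)) (x + 2 • l2)) := by
    rw [mstar, hii2]
    have h := sub_m (x + 2 • l2) (by rw [q0, q1]; omega) (by rw [q3, q2]; omega)
      (kk (T (ii x)) (x + 2 • l2))
    rw [q0, q1, q2, q3] at h
    exact h
  rw [m0, m1, m2]
  cases hTc : T (ii x) with
  | top =>
    have kz : ∀ y : St, kk ⊤ y = 0 := fun _ => rfl
    rw [kz, kz, kz]
    have e1 : zz (x 1 + 1 - x 0 - 0) (x 2 + 1 - x 3 - 0)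
        = zz ((x 1 - x 0) + 1) ((x 2 - x 3) + 1) := zz_congr (by omega) (by omega)
    have e0 : zz (x 1 - x 0 - 0) (x 2 - x 3 - 0)
        = zz (x 1 - x 0) (x 2 - x 3) := zz_congr (by omega) (by omega)
    have e2 : zz (x 1 + 2 - x 0 - 0) (x 2 + 2 - x 3 - 0)
        = zz ((x 1 - x 0) + 2) ((x 2 - x 3) + 2) := zz_congr (by omega) (by omega)
    rw [e0, e1, e2]
    exact main_conv μ hμ0 v hC _ _
  | coe n =>
    obtain ⟨D, hD⟩ : ∃ D : ℤ, D = min ((x 1 : ℤ) - x 0) ((x 2 : ℤ) - x 3) := ⟨_, rfl⟩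
    have hD1 : (x 0 : ℤ) ≤ x 1 := by exact_mod_cast hx1
    have hD2 : (x 3 : ℤ) ≤ x 2 := by exact_mod_cast hx2
    have k0v : kk (n : ℕ∞) x = (D - n).toNat := by
      show (min ((x 1 : ℤ) - x 0) ((x 2 : ℤ) - x 3) - n).toNat = _
      rw [← hD]
    have k1v : kk (n : ℕ∞) (x + l2) = (D + 1 - n).toNat := by
      show (min (((x + l2) 1 : ℤ) - (x + l2) 0) (((x + l2) 2 : ℤ) - (x + l2) 3) - n).toNat = _
      rw [p0, p1, p2, p3]
      congr 1
      push_cast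
      omega
    have k2v : kk (n : ℕ∞) (x + 2 • l2) = (D + 2 - n).toNat := by
      show (min (((x + 2 • l2) 1 : ℤ) - (x + 2 • l2) 0)
        (((x + 2 • l2) 2 : ℤ) - (x + 2 • l2) 3) - n).toNat = _
      rw [q0, q1, q2, q3]
      congr 1
      push_cast
      omega
    rw [k0v, k1v, k2v]
    by_cases hbig : D + 2 ≤ (n : ℤ)
    · -- all k's zero, convexity case
      have e0 : zz (x 1 - x 0 - (D - n).toNat) (x 2 - x 3 - (D - n).toNat)
          = zz (x 1 - x 0) (x 2 - x 3) := zz_congr (by omega) (by omega)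
      have e1 : zz (x 1 + 1 - x 0 - (D + 1 - n).toNat) (x 2 + 1 - x 3 - (D + 1 - n).toNat)
          = zz ((x 1 - x 0) + 1) ((x 2 - x 3) + 1) := zz_congr (by omega) (by omega)
      have e2 : zz (x 1 + 2 - x 0 - (D + 2 - n).toNat) (x 2 + 2 - x 3 - (D + 2 - n).toNat)
          = zz ((x 1 - x 0) + 2) ((x 2 - x 3) + 2) := zz_congr (by omega) (by omega)
      rw [e0, e1, e2]
      exact main_conv μ hμ0 v hC _ _
    by_cases heq : (n : ℤ) = D + 1
    · -- boundary case: use optimality at x + l2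
      have e0 : zz (x 1 - x 0 - (D - n).toNat) (x 2 - x 3 - (D - n).toNat)
          = zz (x 1 - x 0) (x 2 - x 3) := zz_congr (by omega) (by omega)
      have e1 : zz (x 1 + 1 - x 0 - (D + 1 - n).toNat) (x 2 + 1 - x 3 - (D + 1 - n).toNat)
          = zz ((x 1 - x 0) + 1) ((x 2 - x 3) + 1) := zz_congr (by omega) (by omega)
      have e2 : zz (x 1 + 2 - x 0 - (D + 2 - n).toNat) (x 2 + 2 - x 3 - (D + 2 - n).toNat)
          = zz ((x 1 - x 0) + 1) ((x 2 - x 3) + 1) := zz_congr (by omega) (by omega)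
      rw [e0, e1, e2]
      have hm' : IsMatching (x + l2) (x 0 • l1 + 1 • l2 + x 3 • l3) := by
        refine ⟨⟨x 0, 1, x 3, rfl⟩, ?_⟩
        intro i
        fin_cases i <;> simp [l1, l2, l3, ev] <;> omega
      have hopt := (hT (x + l2)).2 _ hm'
      rw [m1, hTc, k1v] at hopt
      have hsub : (x + l2) - (x 0 • l1 + 1 • l2 + x 3 • l3)
          = zz (x 1 - x 0) (x 2 - x 3) := by
        have h := sub_m (x + l2) (by rw [p0, p1]; omega) (by rw [p3, p2]; omega) 1
        rw [p0, p1, p2, p3, min_eq_left (by omega), min_eq_right (by omega)] at h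
        rw [h]; exact zz_congr (by omega) (by omega)
      rw [hsub] at hopt
      have e1' : zz (x 1 + 1 - x 0 - (D + 1 - n).toNat) (x 2 + 1 - x 3 - (D + 1 - n).toNat)
          = zz ((x 1 - x 0) + 1) ((x 2 - x 3) + 1) := e1
      rw [e1'] at hopt
      linarith
    · -- n ≤ D : all three residuals equal
      have e1 : zz (x 1 + 1 - x 0 - (D + 1 - n).toNat) (x 2 + 1 - x 3 - (D + 1 - n).toNat)
          = zz (x 1 - x 0 - (D - n).toNat) (x 2 - x 3 - (D - n).toNat) :=
        zz_congr (by omega) (by omega)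
      have e2 : zz (x 1 + 2 - x 0 - (D + 2 - n).toNat) (x 2 + 2 - x 3 - (D + 2 - n).toNat)
          = zz (x 1 - x 0 - (D - n).toNat) (x 2 - x 3 - (D - n).toNat) :=
        zz_congr (by omega) (by omega)
      rw [e1, e2]
theorem stmt15 (c0 c1 c2 c3 : ℝ) (h0 : 0 ≤ c0) (h1 : 0 ≤ c1) (h2 : 0 ≤ c2) (h3 : 0 ≤ c3)
    (h20 : c2 ≤ c0) (h13 : c1 ≤ c3) (μ : Fin 4 → ℝ) (hμ : IsProb μ)
    (γ : ℝ) (hγ0 : 0 < γ) (hγ1 : γ < 1)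
    (v : St → ℝ) (hv : ∀ x, 0 ≤ v x) (hI1 : I1 v) (hI3 : I3 v) (hI' : Iprime v)
    (hC : Conv2 v) (hB : ClassB v) (T : ℤ → ℕ∞)
    (hT : ∀ y : St, IsMatching y (mstar T y) ∧
      ∀ m : St, IsMatching y m → Ev μ v (y - mstar T y) ≤ Ev μ v (y - m))
    (x : St) (hx1 : x 0 ≤ x 1) (hx2 : x 3 ≤ x 2) :
    Lg μ (costF c0 c1 c2 c3) v γ (x + l2) - Lg μ (costF c0 c1 c2 c3) v γ x
      ≤ Lg μ (costF c0 c1 c2 c3) v γ (x + 2 • l2)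
        - Lg μ (costF c0 c1 c2 c3) v γ (x + l2) := by
  have key : ∀ w : St, Lg μ (costF c0 c1 c2 c3) v γ w
      = costF c0 c1 c2 c3 w + γ * Ev μ v (w - mstar T w) :=
    fun w => lg_eq μ _ v γ w _ (hT w).1 (hT w).2
  rw [key, key, key]
  have p0 : (x + l2) 0 = x 0 := by simp [l2, ev]
  have p1 : (x + l2) 1 = x 1 + 1 := by simp [l2, ev]
  have p2 : (x + l2) 2 = x 2 + 1 := by simp [l2, ev]
  have p3 : (x + l2) 3 = x 3 := by simp [l2, ev]
  have q0 : (x + 2 • l2) 0 = x 0 := by simp [l2, ev]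
  have q1 : (x + 2 • l2) 1 = x 1 + 2 := by simp [l2, ev]
  have q2 : (x + 2 • l2) 2 = x 2 + 2 := by simp [l2, ev]
  have q3 : (x + 2 • l2) 3 = x 3 := by simp [l2, ev]
  have hcost1 : costF c0 c1 c2 c3 (x + l2) = costF c0 c1 c2 c3 x + (c1 + c2) := by
    simp only [costF, p0, p1, p2, p3]; push_cast; ring
  have hcost2 : costF c0 c1 c2 c3 (x + 2 • l2)
      = costF c0 c1 c2 c3 x + (c1 + c2) + (c1 + c2) := by
    simp only [costF, q0, q1, q2, q3]; push_cast; ring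
  rw [hcost1, hcost2]
  have main := core μ hμ.1 v hC T hT x hx1 hx2
  have h := mul_le_mul_of_nonneg_left main hγ0.le
  rw [mul_sub, mul_sub] at h
  linarith
end
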